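/- arXiv:0809.1128 — 3 statements merged into one kernel-verified Lean document; each statement's English description precedes it below -/
import Mathlib

section
/- Let $R$ be a commutative ring and $I$ a radical ideal. For any $h \in R$, $I = (I : h^\infty) \cap \sqrt{I + (h)}$, where $I : h^\infty = \{f \in R \mid \exists n, h^n f \in I\}$ and $\sqrt{I + (h)}$ is the radical of the ideal generated by $I$ and $h$. -/
/-! Over a radical ideal `I` the saturation `I : h^∞` is just `I : h`, since `(h f)^(n+1) ∈ I`
as soon as `h^n f ∈ I`. So if `f ∈ I : h^∞` then `f` multiplies `I + (h)` into `I`, and a power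
`f^m ∈ I + (h)` gives `f^(m+1) ∈ I`, whence `f ∈ I`. -/

namespace Ideal

variable {R : Type*} [CommRing R] {I : Ideal R}

theorem span_singleton_mul_sup_span_singleton_le {h f : R} (hf : h * f ∈ I) :
    span {f} * (I ⊔ span {h}) ≤ I := by
  rw [mul_sup, span_singleton_mul_span_singleton, mul_comm f]
  exact sup_le mul_le_right ((span_singleton_le_iff_mem I).mpr hf)

namespace IsRadical

theorem mul_mem_of_pow_mul_mem (hI : I.IsRadical) {h f : R} {n : ℕ} (hn : h ^ n * f ∈ I) :
    h * f ∈ I :=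
  hI ⟨n + 1, by
    rw [show (h * f) ^ (n + 1) = h * f ^ n * (h ^ n * f) by ring]
    exact I.mul_mem_left _ hn⟩

theorem mem_of_span_singleton_mul_le_of_mem_radical (hI : I.IsRadical) {J : Ideal R} {f : R}
    (hfJ : span {f} * J ≤ I) (hf : f ∈ J.radical) : f ∈ I := by
  obtain ⟨m, hm⟩ := hf
  exact hI ⟨m + 1, pow_succ' f m ▸ hfJ (mul_mem_mul (mem_span_singleton_self f) hm)⟩

end IsRadical

end Ideal

/-- A radical ideal is the intersection of its saturation at `h` with the
radical of the ideal generated by `I` and `h`. -/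
theorem radical_eq_saturation_inter {R : Type*} [CommRing R] (I : Ideal R)
    (hI : I.radical = I) (h : R) :
    (I : Set R) =
      {f : R | ∃ n : ℕ, h ^ n * f ∈ I} ∩
        ((I ⊔ Ideal.span {h}).radical : Set R) := by
  have hI : I.IsRadical := Ideal.radical_eq_iff.mp hI
  ext f
  constructor
  · intro hf
    exact ⟨⟨0, by simpa using hf⟩, Ideal.le_radical (Ideal.mem_sup_left hf)⟩
  · rintro ⟨⟨n, hn⟩, hf⟩
    exact hI.mem_of_span_singleton_mul_le_of_mem_radical
      (Ideal.span_singleton_mul_sup_span_singleton_le (hI.mul_mem_of_pow_mul_mem hn)) hf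
end

section
/- Let $R$ be a commutative ring, $I$ a radical ideal of $R$, and let $J$ be an ideal and $h \in R$ be such that $J \subseteq I \subseteq J : h^\infty$. Suppose $J$ is generated by elements $C_1, \ldots, C_l$ all lying in $I$. Then $I = (J : h^\infty) \cap (I : C_1) \cap \cdots \cap (I : C_l) \cap \sqrt{I + (h)}$. -/
/-!
If `f` satisfies the three conditions, then `h ^ n * f ∈ J` and `C i * f ∈ I` give
`(h ^ n * f) * f ∈ I`, so `h ^ n * f ∈ I` as `I` is radical. Now test against a prime `P ⊇ I`:
if `h ∈ P` then `P ⊇ I + (h)` contains `f` because `f ∈ √(I + (h))`; otherwise `h ^ n * f ∈ P`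
forces `f ∈ P`. Hence `f ∈ √I = I`.
-/

namespace Ideal

variable {R : Type*} [CommRing R]

theorem mul_mem_of_mem_span_range {ι : Type*} {I : Ideal R} {C : ι → R} {f g : R}
    (hCf : ∀ i, C i * f ∈ I) (hg : g ∈ span (Set.range C)) : g * f ∈ I :=
  mem_colon_span_singleton.1 <|
    span_le.2 (Set.range_subset_iff.2 fun i ↦ mem_colon_span_singleton.2 (hCf i)) hg

theorem mem_radical_of_mem_radical_sup_span_singleton {I : Ideal R} {f h : R} {n : ℕ}
    (hf : f ∈ (I ⊔ span {h}).radical) (hhf : h ^ n * f ∈ I.radical) : f ∈ I.radical := by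
  rw [radical_eq_sInf, mem_sInf]
  rintro P ⟨hIP, hP⟩
  by_cases hh : h ∈ P
  · have hle : I ⊔ span {h} ≤ P := sup_le hIP (span_le.2 (Set.singleton_subset_iff.2 hh))
    exact hP.radical ▸ radical_mono hle hf
  · exact ((hP.mem_or_mem ((hP.radical_le_iff.2 hIP) hhf)).resolve_left
      fun hhn ↦ hh (hP.mem_of_pow_mem n hhn))

end Ideal

theorem radical_decomposition_sandwich_general {R : Type*} [CommRing R] (I : Ideal R)
    (hI : I.radical = I) {l : ℕ} (C : Fin l → R)
    (J : Ideal R) (hJ : J = Ideal.span (Set.range C)) (h : R)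
    (hIJ : ∀ f ∈ I, ∃ n : ℕ, h ^ n * f ∈ J) :
    ∀ f : R, f ∈ I ↔
      ((∃ n : ℕ, h ^ n * f ∈ J) ∧ (∀ i, C i * f ∈ I) ∧
        f ∈ (I ⊔ Ideal.span {h}).radical) := by
  intro f
  refine ⟨fun hf ↦ ⟨hIJ f hf, fun i ↦ I.mul_mem_left _ hf,
    Ideal.le_radical (Ideal.mem_sup_left hf)⟩, ?_⟩
  rintro ⟨⟨n, hn⟩, hCf, hrad⟩
  have hsq : h ^ n * f * f ∈ I := Ideal.mul_mem_of_mem_span_range hCf (hJ ▸ hn)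
  have hhf : h ^ n * f ∈ I.radical :=
    ⟨2, by convert I.mul_mem_left (h ^ n) hsq using 1; ring⟩
  rw [← hI]
  exact Ideal.mem_radical_of_mem_radical_sup_span_singleton hrad hhf

/-- Proposition 2 (algebraic form): decomposition of a radical ideal via a
sandwiched ideal `J` and its saturation. -/
theorem radical_decomposition_sandwich {R : Type*} [CommRing R] (I : Ideal R)
    (hI : I.radical = I) {l : ℕ} (C : Fin l → R) (hC : ∀ i, C i ∈ I)
    (J : Ideal R) (hJ : J = Ideal.span (Set.range C)) (h : R)
    (hIJ : ∀ f ∈ I, ∃ n : ℕ, h ^ n * f ∈ J) :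
    ∀ f : R, f ∈ I ↔
      ((∃ n : ℕ, h ^ n * f ∈ J) ∧ (∀ i, C i * f ∈ I) ∧
        f ∈ (I ⊔ Ideal.span {h}).radical) :=
  radical_decomposition_sandwich_general I hI C J hJ h hIJ
end

section
/- Let $R$ be a commutative ring, $I$ a radical ideal, $C_1, \ldots, C_l \in I$ generating an ideal $J$, and $h \in R$. If $f \in (J : h^\infty) \cap (I : C_1) \cap \cdots \cap (I : C_l)$, then $f \in I : h^\infty$. -/
/-! Write `h ^ n * f = ∑ aᵢ Cᵢ`. Multiplying by `f` gives `h ^ n * f * f ∈ I`, since each `Cᵢ * f ∈ I`;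
hence `(h ^ n * f) ^ 2 = h ^ n * (h ^ n * f * f) ∈ I`, and `h ^ n * f ∈ I` because `I` is radical. -/

theorem Ideal.mul_mem_of_mem_span {R : Type*} [CommRing R] {I : Ideal R} {s : Set R} {x f : R}
    (hx : x ∈ Ideal.span s) (hs : ∀ c ∈ s, c * f ∈ I) : x * f ∈ I :=
  Submodule.mem_colon_singleton.1 <|
    Ideal.span_le.2 (fun c hc => Submodule.mem_colon_singleton.2 (hs c hc)) hx

theorem Ideal.IsRadical.mem_of_mul_self_mem {R : Type*} [CommRing R] {I : Ideal R}
    (hI : I.IsRadical) {x : R} (hx : x * x ∈ I) : x ∈ I :=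
  hI ⟨2, by rwa [pow_two]⟩

theorem mem_saturation_of_colon_general {R : Type*} [CommRing R] (I : Ideal R)
    (hI : I.radical = I) {l : ℕ} (C : Fin l → R)
    (J : Ideal R) (hJ : J = Ideal.span (Set.range C)) (h : R) (f : R)
    (h1 : ∃ n : ℕ, h ^ n * f ∈ J) (h2 : ∀ i, C i * f ∈ I) :
    ∃ n : ℕ, h ^ n * f ∈ I := by
  obtain ⟨n, hn⟩ := h1
  subst hJ
  have hnf : h ^ n * f * f ∈ I := Ideal.mul_mem_of_mem_span hn (by rintro _ ⟨i, rfl⟩; exact h2 i)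
  have hsq : h ^ n * f * (h ^ n * f) ∈ I := by
    rw [show h ^ n * f * (h ^ n * f) = h ^ n * (h ^ n * f * f) by ring]
    exact I.mul_mem_left _ hnf
  exact ⟨n, (Ideal.radical_eq_iff.1 hI).mem_of_mul_self_mem hsq⟩

/-- Key step of Proposition 2: membership in `J : h^∞` together with
`C i * f ∈ I` for all generators forces membership in `I : h^∞`. -/
theorem mem_saturation_of_colon {R : Type*} [CommRing R] (I : Ideal R)
    (hI : I.radical = I) {l : ℕ} (C : Fin l → R) (hC : ∀ i, C i ∈ I)
    (J : Ideal R) (hJ : J = Ideal.span (Set.range C)) (h : R) (f : R)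
    (h1 : ∃ n : ℕ, h ^ n * f ∈ J) (h2 : ∀ i, C i * f ∈ I) :
    ∃ n : ℕ, h ^ n * f ∈ I :=
  mem_saturation_of_colon_general I hI C J hJ h f h1 h2
end
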